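/- arXiv:1401.7948 — 3 statements merged into one kernel-verified Lean document; each statement's English description precedes it below -/
import Mathlib

section
/- For infinite cardinals κ ≤ λ and any cardinal μ ≥ λ⁺, the cofinality of ⟨^λκ, ≤⟩ is at most the cofinality of ⟨^μκ, ≤*⟩. -/
open Cardinal Order

/-- The cofinality of the everywhere (pointwise) domination order on functions `X → K`. -/
noncomputable def everyCof (X K : Type*) [LE K] : Cardinal :=
  sInf {c | ∃ D : Set (X → K), #D = c ∧ ∀ f : X → K, ∃ g ∈ D, ∀ x, f x ≤ g x}

/-- The cofinality of the eventual domination order on functions `X → K`. -/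
noncomputable def evenCof (X K : Type*) [LE X] [LE K] : Cardinal :=
  sInf {c | ∃ D : Set (X → K), #D = c ∧
    ∀ f : X → K, ∃ g ∈ D, ∃ a : X, ∀ b : X, a ≤ b → f b ≤ g b}

/-! Since `μ ≥ λ` is infinite, `μ ≃ μ × λ`, and under such a bijection every fibre `μ × {x}` is
unbounded in `μ`, because all proper initial segments of `μ` have size `< μ`. Given an eventually
dominating family `D` on `^μκ` and `f : λ → κ`, spread `f x` over the whole fibre of `x` and
dominate the result by some `g ∈ D` beyond a threshold `a`; reading `g` at a point above `a` in
each fibre then dominates `f` everywhere. Hence `cof(^λκ, ≤) ≤ |D| · μ`. A diagonal argument along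
a bijection `μ ≃ μ × D` shows `|D| ≥ μ`, so `|D| · μ = |D|`. -/

universe u

section Domination

variable {X K : Type u}

def IsDominating [LE K] (D : Set (X → K)) : Prop :=
  ∀ f : X → K, ∃ g ∈ D, ∀ x, f x ≤ g x

def IsEventuallyDominating [LE X] [LE K] (D : Set (X → K)) : Prop :=
  ∀ f : X → K, ∃ g ∈ D, ∃ a : X, ∀ b : X, a ≤ b → f b ≤ g b

theorem everyCof_le_mk [LE K] {D : Set (X → K)} (hD : IsDominating D) : everyCof X K ≤ #D :=
  csInf_le' ⟨D, rfl, hD⟩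

theorem exists_mk_eq_evenCof [LE X] [Nonempty X] [Preorder K] :
    ∃ D : Set (X → K), #D = evenCof X K ∧ IsEventuallyDominating D :=
  csInf_mem (s := {c | ∃ D : Set (X → K), #D = c ∧ IsEventuallyDominating D})
    ⟨_, Set.univ, rfl, fun f => ⟨f, trivial, Classical.arbitrary X, fun _ _ => le_rfl⟩⟩

end Domination

namespace Cardinal

theorem nonempty_ord_toType_of_aleph0_le {c : Cardinal} (hc : ℵ₀ ≤ c) : Nonempty c.ord.ToType :=
  nonempty_ord_toType (aleph0_pos.trans_le hc).ne'

theorem nonempty_equiv_prod {X Y : Type u} [Nonempty Y] (hX : ℵ₀ ≤ #X) (hY : #Y ≤ #X) :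
    Nonempty (X ≃ X × Y) :=
  Cardinal.eq.1 <| by rw [mk_prod, lift_id, lift_id, mul_eq_left hX hY (mk_ne_zero Y)]

open scoped Ordinal in
theorem exists_le_apply_of_injective {α : Type u} [LinearOrder α] [WellFoundedLT α]
    (hα : (#α).ord = typeLT α) {ψ : α → α} (hψ : ψ.Injective) (a : α) : ∃ b, a ≤ ψ b := by
  by_contra! h
  have : #α ≤ #(Set.Iio a) :=
    mk_le_of_injective (f := fun b => ⟨ψ b, h b⟩) fun b c hbc => hψ (congrArg Subtype.val hbc)
  exact this.not_gt (mk_Iio_lt a hα)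

end Cardinal

section Fibres

variable {m : Cardinal.{u}} {Y : Type u}

theorem nonempty_toType_ord_equiv_prod (hm : ℵ₀ ≤ m) [Nonempty Y] (hY : #Y ≤ m) :
    Nonempty (m.ord.ToType ≃ m.ord.ToType × Y) :=
  nonempty_equiv_prod (by rwa [mk_ord_toType]) (by rwa [mk_ord_toType])

theorem exists_le_symm_apply_mk (e : m.ord.ToType ≃ m.ord.ToType × Y) (y : Y) (a : m.ord.ToType) :
    ∃ b, a ≤ e.symm (b, y) :=
  exists_le_apply_of_injective (by simp) (e.symm.injective.comp (Prod.mk_left_injective y)) a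

theorem le_mk_of_isEventuallyDominating (hm : ℵ₀ ≤ m) {K : Type u} [Preorder K] [Nonempty K]
    [NoMaxOrder K] {D : Set (m.ord.ToType → K)} (hD : IsEventuallyDominating D) : m ≤ #D := by
  by_contra! hlt
  have : Nonempty D := let ⟨g, hg, _⟩ := hD fun _ => Classical.arbitrary K; ⟨⟨g, hg⟩⟩
  obtain ⟨e⟩ := nonempty_toType_ord_equiv_prod hm hlt.le (Y := D)
  choose f hf using fun b => exists_gt ((e b).2.1 b)
  obtain ⟨g, hg, a, hga⟩ := hD f
  obtain ⟨b, hb⟩ := exists_le_symm_apply_mk e ⟨g, hg⟩ a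
  have hfg := hf (e.symm (b, ⟨g, hg⟩))
  rw [e.apply_symm_apply] at hfg
  exact (hfg.trans_le (hga _ hb)).false

theorem le_evenCof (hm : ℵ₀ ≤ m) (K : Type u) [Preorder K] [Nonempty K] [NoMaxOrder K] :
    m ≤ evenCof m.ord.ToType K := by
  have := nonempty_ord_toType_of_aleph0_le hm
  obtain ⟨D, hDc, hD⟩ := exists_mk_eq_evenCof (X := m.ord.ToType) (K := K)
  exact hDc ▸ le_mk_of_isEventuallyDominating hm hD

theorem everyCof_le_mk_mul (hm : ℵ₀ ≤ m) [Nonempty Y] (hY : #Y ≤ m) {K : Type u} [LE K]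
    {D : Set (m.ord.ToType → K)} (hD : IsEventuallyDominating D) : everyCof Y K ≤ #D * m := by
  obtain ⟨e⟩ := nonempty_toType_ord_equiv_prod hm hY
  choose b hb using exists_le_symm_apply_mk e
  let D' : Set (Y → K) :=
    Set.range fun p : D × m.ord.ToType => fun y => p.1.1 (e.symm (b y p.2, y))
  have hD' : IsDominating D' := fun f => by
    obtain ⟨g, hg, a, hga⟩ := hD fun x => f (e x).2
    refine ⟨_, ⟨(⟨g, hg⟩, a), rfl⟩, fun y => ?_⟩
    simpa only [e.apply_symm_apply] using hga _ (hb y a)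
  calc everyCof Y K ≤ #D' := everyCof_le_mk hD'
    _ ≤ #(D × m.ord.ToType) := mk_range_le
    _ = #D * m := by rw [mk_prod, lift_id, lift_id, mk_ord_toType]

end Fibres

theorem stmt_5 (k l m : Cardinal) (hk : ℵ₀ ≤ k) (hkl : k ≤ l) (hm : Order.succ l ≤ m) :
    everyCof l.ord.ToType k.ord.ToType ≤ evenCof m.ord.ToType k.ord.ToType := by
  have hl : ℵ₀ ≤ l := hk.trans hkl
  have hlm : l ≤ m := (le_succ l).trans hm
  have hm₀ : ℵ₀ ≤ m := hl.trans hlm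
  have := nonempty_ord_toType_of_aleph0_le hl
  have := nonempty_ord_toType_of_aleph0_le hk
  have := nonempty_ord_toType_of_aleph0_le hm₀
  have := noMaxOrder hk
  have hmE := le_evenCof hm₀ k.ord.ToType
  obtain ⟨D, hDc, hD⟩ := exists_mk_eq_evenCof (X := m.ord.ToType) (K := k.ord.ToType)
  calc everyCof _ _ ≤ #D * m := everyCof_le_mk_mul hm₀ (by rwa [mk_ord_toType]) hD
    _ = evenCof _ _ := by
      rw [hDc, mul_eq_left (hm₀.trans hmE) hmE (aleph0_pos.trans_le hm₀).ne']
end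

section
/- For infinite cardinals κ ≤ λ, the cofinality of the everywhere domination order on ^(λ⁺)κ equals the cofinality of the eventual domination order on ^(λ⁺)κ. -/
open Cardinal Order

/-!
Eventual domination is weaker than everywhere domination, so `evenCof ≤ everyCof`. Conversely, let
`D` be an eventually dominating family of size `evenCof`. All initial segments of `λ⁺` are small,
so a diagonal argument gives `λ⁺ ≤ #D`. Splitting `λ⁺ ≃ λ⁺ × λ⁺` into `λ⁺` columns, the
restrictions of the members of `D` to the columns dominate everywhere, since for every `g ∈ D` some
column lies entirely beyond the point from which `g` dominates; there are `#D · λ⁺ = #D` of them.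
-/

open Set

universe u v

section LinearOrder

variable {X : Type u} [LinearOrder X]

theorem exists_mem_ge_of_mk_Iio_lt {s : Set X} {a : X} (ha : #(Iio a) < #s) : ∃ b ∈ s, a ≤ b := by
  by_contra! h
  exact ha.not_ge (mk_le_mk_of_subset h)

theorem exists_forall_ge_of_mk_Iio_lt (e : X × X ≃ X) {a : X} (ha : #(Iio a) < #X) :
    ∃ η, ∀ ξ, a ≤ e (η, ξ) := by
  by_contra! h
  choose ξ hξ using h
  refine ha.not_ge (mk_le_of_injective (f := fun η => (⟨e (η, ξ η), hξ η⟩ : Iio a)) ?_)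
  intro η η' hηη'
  exact (Prod.ext_iff.1 (e.injective (Subtype.ext_iff.1 hηη'))).1

end LinearOrder

variable {X : Type u} {K : Type v}

def EverywhereDominating [LE K] (D : Set (X → K)) : Prop :=
  ∀ f : X → K, ∃ g ∈ D, ∀ x, f x ≤ g x

def EventuallyDominating [LE X] [LE K] (D : Set (X → K)) : Prop :=
  ∀ f : X → K, ∃ g ∈ D, ∃ a : X, ∀ b : X, a ≤ b → f b ≤ g b

theorem everywhereDominating_univ [Preorder K] : EverywhereDominating (univ : Set (X → K)) :=
  fun f => ⟨f, mem_univ f, fun _ => le_rfl⟩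

theorem EverywhereDominating.eventuallyDominating [LE X] [LE K] [Nonempty X] {D : Set (X → K)}
    (hD : EverywhereDominating D) : EventuallyDominating D := fun f =>
  let ⟨g, hg, hfg⟩ := hD f
  ⟨g, hg, Classical.arbitrary X, fun b _ => hfg b⟩

theorem everyCof_le [LE K] {D : Set (X → K)} (hD : EverywhereDominating D) :
    everyCof X K ≤ #D :=
  csInf_le' ⟨D, rfl, hD⟩

theorem evenCof_le [LE X] [LE K] {D : Set (X → K)} (hD : EventuallyDominating D) :
    evenCof X K ≤ #D :=
  csInf_le' ⟨D, rfl, hD⟩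

theorem exists_everywhereDominating_mk_eq_everyCof [Preorder K] :
    ∃ D : Set (X → K), #D = everyCof X K ∧ EverywhereDominating D :=
  csInf_mem (s := {c | ∃ D : Set (X → K), #D = c ∧ EverywhereDominating D})
    ⟨_, univ, rfl, everywhereDominating_univ⟩

theorem exists_eventuallyDominating_mk_eq_evenCof [LE X] [Preorder K] [Nonempty X] :
    ∃ D : Set (X → K), #D = evenCof X K ∧ EventuallyDominating D :=
  csInf_mem (s := {c | ∃ D : Set (X → K), #D = c ∧ EventuallyDominating D})
    ⟨_, univ, rfl, everywhereDominating_univ.eventuallyDominating⟩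

theorem evenCof_le_everyCof [LE X] [Preorder K] [Nonempty X] : evenCof X K ≤ everyCof X K :=
  let ⟨_, hDc, hD⟩ := exists_everywhereDominating_mk_eq_everyCof (X := X) (K := K)
  hDc ▸ evenCof_le hD.eventuallyDominating

/-- Diagonalisation: enumerate `D × X` along `X` so that every `g ∈ D` is beaten on a set of
size `#X`, which is cofinal in `X`. -/
theorem EventuallyDominating.lift_mk_le [LinearOrder X] [Preorder K] [Nonempty K] [NoMaxOrder K]
    (hX : ℵ₀ ≤ #X) (hsmall : ∀ a : X, #(Iio a) < #X) {D : Set (X → K)}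
    (hD : EventuallyDominating D) : lift.{v} #X ≤ #D := by
  by_contra! hlt
  obtain ⟨ι⟩ : Nonempty (D × X ↪ X) := by
    refine lift_mk_le'.1 ?_
    rw [mk_prod, lift_id'.{u, v}, lift_id'.{u, v}, lift_umax]
    calc #D * lift.{v} #X ≤ lift.{v} #X * lift.{v} #X := by gcongr
      _ = lift.{v} #X := mul_eq_self (aleph0_le_lift.2 hX)
  choose up hup using fun c : K => exists_gt c
  obtain ⟨g, hg, a, ha⟩ :=
    hD (Function.extend ι (fun p : D × X => up (p.1.1 (ι p))) fun _ => Classical.arbitrary K)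
  obtain ⟨_, ⟨y, rfl⟩, hab⟩ := exists_mem_ge_of_mk_Iio_lt (s := range fun y => ι (⟨g, hg⟩, y))
    (a := a) (by rw [mk_range_eq _ fun y y' h => (Prod.ext_iff.1 (ι.injective h)).2]; exact hsmall a)
  have := ha _ hab
  rw [ι.injective.extend_apply] at this
  exact (hup _).not_ge this

theorem EventuallyDominating.everywhereDominating_columns [LinearOrder X] [LE K] (e : X × X ≃ X)
    (hsmall : ∀ a : X, #(Iio a) < #X) {D : Set (X → K)} (hD : EventuallyDominating D) :
    EverywhereDominating (range fun p : D × X => fun ξ => p.1.1 (e (p.2, ξ))) := by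
  intro f
  obtain ⟨g, hg, a, ha⟩ := hD fun x => f (e.symm x).2
  obtain ⟨η, hη⟩ := exists_forall_ge_of_mk_Iio_lt e (hsmall a)
  exact ⟨_, ⟨(⟨g, hg⟩, η), rfl⟩, fun ξ => by simpa using ha _ (hη ξ)⟩

theorem everyCof_le_evenCof_mul_lift [LinearOrder X] [Preorder K] (hX : ℵ₀ ≤ #X)
    (hsmall : ∀ a : X, #(Iio a) < #X) : everyCof X K ≤ evenCof X K * lift.{v} #X := by
  have := infinite_iff.2 hX
  obtain ⟨D, hDc, hD⟩ := exists_eventuallyDominating_mk_eq_evenCof (X := X) (K := K)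
  obtain ⟨e⟩ : Nonempty (X × X ≃ X) := Cardinal.eq.1 (by rw [mk_prod, lift_id, mul_eq_self hX])
  calc everyCof X K ≤ #(range _) := everyCof_le (hD.everywhereDominating_columns e hsmall)
    _ ≤ #(D × X) := mk_range_le
    _ = evenCof X K * lift.{v} #X := by rw [mk_prod, lift_id'.{u, v}, lift_umax.{u, v}, hDc]

theorem everyCof_eq_evenCof [LinearOrder X] [Preorder K] [Nonempty K] [NoMaxOrder K]
    (hX : ℵ₀ ≤ #X) (hsmall : ∀ a : X, #(Iio a) < #X) : everyCof X K = evenCof X K := by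
  have := infinite_iff.2 hX
  obtain ⟨D, hDc, hD⟩ := exists_eventuallyDominating_mk_eq_evenCof (X := X) (K := K)
  have hX_le : lift.{v} #X ≤ evenCof X K := hDc ▸ hD.lift_mk_le hX hsmall
  refine le_antisymm ?_ evenCof_le_everyCof
  calc everyCof X K ≤ evenCof X K * lift.{v} #X := everyCof_le_evenCof_mul_lift hX hsmall
    _ = evenCof X K := Cardinal.mul_eq_left ((aleph0_le_lift.2 hX).trans hX_le) hX_le
        (lift_eq_zero.not.2 (aleph0_pos.trans_le hX).ne')

theorem stmt_7 (k l : Cardinal) (hk : ℵ₀ ≤ k) (hkl : k ≤ l) :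
    everyCof (Order.succ l).ord.ToType k.ord.ToType
      = evenCof (Order.succ l).ord.ToType k.ord.ToType := by
  have := Cardinal.noMaxOrder hk
  have := (infinite_iff (α := k.ord.ToType)).2 (by rwa [mk_ord_toType])
  refine everyCof_eq_evenCof ?_ fun a => mk_Iio_lt a (by rw [mk_ord_toType, Ordinal.type_toType])
  rw [mk_ord_toType]
  exact (hk.trans hkl).trans (le_succ l)
end

section
/- Let ⟨P, ≤_P⟩ be a partial order whose bounding number (least size of an unbounded subset) is κ, let λ be a cardinal with |P| ≤ 2^λ and λ^κ = λ. Then the pointwise-product order ⟨^λP, ≤⟩ (f ≤ g iff f(α) ≤_P g(α) for all α < λ) has cofinality exactly 2^λ. Moreover there exist maps φ⁻ : ^λκ → ^λP and φ⁺ : ^λP → ^λκ such that for all g ∈ ^λκ and f ∈ ^λP, if φ⁻(g) ≤ f pointwise in P, then g ≤ φ⁺(f) pointwise in κ. -/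
open Cardinal Order

/-- The bounding number of a partial order: the least cardinality of an unbounded subset. -/
noncomputable def boundingNumber (P : Type*) [PartialOrder P] : Cardinal :=
  sInf {c | ∃ A : Set P, #A = c ∧ ¬ ∃ p : P, ∀ a ∈ A, a ≤ p}

/-!
If `a : κ → P` enumerates an unbounded set of size `κ = b(P)`, every initial segment of `a` is
smaller than `κ`, hence has a bound `φ j`, and `ψ p := min {j | a j ≰ p}` satisfies
`φ j ≤ p → j ≤ ψ p`. Applied pointwise, this Tukey connection makes any cofinal family in `^λP`
yield one in `^λκ` of no larger size.

Cofinal families in `^λκ` have size `2^λ`: since `λ^κ = λ`, a point `x < λ` can encode a table of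
`κ × κ` points and truth values. Reading off from `x` the row of the table that agrees with
`A ⊆ λ` gives `f_A : λ → κ` such that fewer than `κ` sets `A` have `f_A` below a given `g`: `κ`
distinct sets, separated pairwise by the table at a suitable `x`, would force `g x` above every
`j < κ`. As `κ < 2^λ`, covering all `2^λ` sets `A` takes `2^λ` dominating functions. The upper
bound is `|^λP| ≤ (2^λ)^λ = 2^λ`.
-/

open Set Function

universe u v

def IsTukeyPair {K Q : Type*} [LE K] [LE Q] (φ : K → Q) (ψ : Q → K) : Prop :=
  ∀ j q, φ j ≤ q → j ≤ ψ q

section BoundingNumber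

variable {P : Type u} [PartialOrder P]

theorem bddAbove_of_mk_lt_boundingNumber {A : Set P} (hA : #A < boundingNumber P) :
    BddAbove A := by
  by_contra h
  exact (csInf_le' ⟨A, rfl, h⟩ : boundingNumber P ≤ #A).not_gt hA

theorem exists_not_bddAbove_mk_eq_boundingNumber (h : boundingNumber P ≠ 0) :
    ∃ A : Set P, #A = boundingNumber P ∧ ¬ BddAbove A := by
  have hne : {c | ∃ A : Set P, #A = c ∧ ¬ ∃ p : P, ∀ a ∈ A, a ≤ p}.Nonempty :=
    nonempty_iff_ne_empty.2 fun he => h (by rw [boundingNumber, he, sInf_empty])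
  exact csInf_mem hne

end BoundingNumber

theorem exists_isTukeyPair_of_not_bddAbove {K P : Type*} [LinearOrder K] [WellFoundedLT K]
    [Preorder P] (a : K → P) (ha : ¬ BddAbove (range a)) (hbdd : ∀ j, BddAbove (a '' Iic j)) :
    ∃ (φ : K → P) (ψ : P → K), IsTukeyPair φ ψ := by
  choose φ hφ using hbdd
  have hesc : ∀ p, ∃ j, ¬ a j ≤ p := fun p => by
    by_contra! h
    exact ha ⟨p, forall_mem_range.2 h⟩
  refine ⟨φ, fun p => wellFounded_lt.min {j | ¬ a j ≤ p} (hesc p), fun j p hjp => ?_⟩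
  by_contra! hlt
  exact wellFounded_lt.min_mem _ (hesc p) ((hφ j (mem_image_of_mem a hlt.le)).trans hjp)

theorem exists_isTukeyPair_of_boundingNumber_eq {P : Type u} [PartialOrder P] {k : Cardinal.{u}}
    (hk : ℵ₀ ≤ k) (hb : boundingNumber P = k) :
    ∃ (φ : k.ord.ToType → P) (ψ : P → k.ord.ToType), IsTukeyPair φ ψ := by
  have hb0 : boundingNumber P ≠ 0 := hb ▸ (aleph0_pos.trans_le hk).ne'
  obtain ⟨A, hA, hAunb⟩ := exists_not_bddAbove_mk_eq_boundingNumber hb0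
  obtain ⟨e⟩ : Nonempty (k.ord.ToType ≃ A) := Cardinal.eq.1 (by rw [mk_ord_toType, hA, hb])
  refine exists_isTukeyPair_of_not_bddAbove (Subtype.val ∘ e) ?_
    fun j => bddAbove_of_mk_lt_boundingNumber ?_
  · rwa [range_comp Subtype.val e, e.range_eq_univ, image_univ, Subtype.range_coe]
  · calc #((Subtype.val ∘ e) '' Iic j) ≤ #(Iic j) := mk_image_le
      _ < #k.ord.ToType := mk_Iic_lt j (by simp) (by simpa using hk)
      _ = boundingNumber P := by rw [mk_ord_toType, hb]

theorem everyCof_le_mk_s17 (X K : Type*) [Preorder K] : everyCof X K ≤ #(X → K) :=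
  csInf_le' ⟨univ, mk_univ, fun f => ⟨f, mem_univ f, fun _ => le_rfl⟩⟩

theorem IsTukeyPair.everyCof_le {X : Type u} {K Q : Type v} [LE K] [Preorder Q]
    {φ : K → Q} {ψ : Q → K} (h : IsTukeyPair φ ψ) : everyCof X K ≤ everyCof X Q := by
  refine le_csInf ⟨_, univ, rfl, fun f => ⟨f, mem_univ f, fun _ => le_rfl⟩⟩ ?_
  rintro _ ⟨D, rfl, hD⟩
  refine le_trans ?_ (mk_image_le (f := (ψ ∘ ·)))
  refine csInf_le' ⟨_, rfl, fun g => ?_⟩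
  obtain ⟨d, hd, hgd⟩ := hD (φ ∘ g)
  exact ⟨ψ ∘ d, mem_image_of_mem _ hd, fun x => h _ _ (hgd x)⟩

theorem exists_decoding {X K : Type u} [Nonempty X] [Nonempty K]
    (hX : #((K × K → X) × (K × K → Bool)) ≤ #X) :
    ∃ f : Set X → X → K, ∀ v : K → Set X, Injective v → ∃ x, ∀ j, f (v j) x = j := by
  classical
  obtain ⟨emb⟩ := hX
  -- `x` encodes the table `π x`; `f A x` is a row of it along which it agrees with `A`
  let π := invFun emb
  let Agrees (A : Set X) (x : X) (j : K) : Prop :=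
    ∀ j', ((π x).1 (j, j') ∈ A ↔ (π x).2 (j, j') = true)
  refine ⟨fun A x => if h : ∃ j, Agrees A x j then h.choose else Classical.arbitrary K,
    fun v hv => ?_⟩
  have hsep : ∀ i j, i ≠ j → ∃ y, ¬ (y ∈ v i ↔ y ∈ v j) := fun i j hij => by
    by_contra! h
    exact hij (hv (Set.ext h))
  let e : K × K → X := fun q =>
    if h : q.1 = q.2 then Classical.arbitrary X else (hsep q.1 q.2 h).choose
  let x := emb (e, fun q => decide (e q ∈ v q.1))
  have hπx : π x = (e, fun q => decide (e q ∈ v q.1)) := leftInverse_invFun emb.injective _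
  have hagrees : ∀ i j, Agrees (v j) x i ↔ i = j := by
    intro i j
    simp only [Agrees, hπx, decide_eq_true_eq]
    refine ⟨fun h => ?_, fun h _ => h ▸ Iff.rfl⟩
    by_contra hij
    have hsepij : ¬ (e (i, j) ∈ v i ↔ e (i, j) ∈ v j) := by
      simpa only [e, dif_neg hij] using (hsep i j hij).choose_spec
    exact hsepij (h j).symm
  refine ⟨x, fun j => ?_⟩
  have h : ∃ i, Agrees (v j) x i := ⟨j, (hagrees j j).2 rfl⟩
  simp only [dif_pos h]
  exact (hagrees _ j).1 h.choose_spec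

theorem mk_setOf_forall_le_lt {X K : Type u} [Preorder K] [NoMaxOrder K] {f : Set X → X → K}
    (hf : ∀ v : K → Set X, Injective v → ∃ x, ∀ j, f (v j) x = j) (d : X → K) :
    #{A | ∀ x, f A x ≤ d x} < #K := by
  by_contra! h
  obtain ⟨v⟩ := h
  obtain ⟨x, hx⟩ := hf (fun j => v j) (Subtype.val_injective.comp v.injective)
  obtain ⟨j, hj⟩ := exists_gt (d x)
  exact hj.not_ge (hx j ▸ (v j).2 x)

theorem two_power_le_everyCof {X K : Type u} [Preorder K] [NoMaxOrder K]
    (hK : ℵ₀ ≤ #K) (hX : ℵ₀ ≤ #X) (hXK : #X ^ #K = #X) : 2 ^ #X ≤ everyCof X K := by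
  have : Infinite K := infinite_iff.2 hK
  have : Infinite X := infinite_iff.2 hX
  have h2X : 2 ≤ #X := ofNat_lt_aleph0.le.trans hX
  have hcode : #((K × K → X) × (K × K → Bool)) ≤ #X := by
    simp only [mk_prod, mk_arrow, lift_id, lift_uzero, mk_bool, lift_ofNat, mul_eq_self hK, hXK]
    calc #X * 2 ^ #K ≤ #X * #X ^ #K := mul_le_mul' le_rfl (power_le_power_right h2X)
      _ = #X := by rw [hXK, mul_eq_self hX]
  obtain ⟨f, hf⟩ := exists_decoding hcode
  have hKX : #K < 2 ^ #X := calc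
    #K < 2 ^ #K := cantor _
    _ ≤ #X ^ #K := power_le_power_right h2X
    _ = #X := hXK
    _ < 2 ^ #X := cantor _
  refine le_csInf ⟨_, univ, rfl, fun f => ⟨f, mem_univ f, fun _ => le_rfl⟩⟩ ?_
  rintro _ ⟨D, rfl, hD⟩
  have hcover : (univ : Set (Set X)) ⊆ ⋃ d ∈ D, {A | ∀ x, f A x ≤ d x} := fun A _ => by
    obtain ⟨d, hd, hAd⟩ := hD (f A)
    exact mem_biUnion hd hAd
  by_contra! hD
  have := calc 2 ^ #X = #(univ : Set (Set X)) := by rw [mk_univ, mk_set]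
    _ ≤ #(⋃ d ∈ D, {A | ∀ x, f A x ≤ d x}) := mk_le_mk_of_subset hcover
    _ ≤ #D * ⨆ d : D, #{A | ∀ x, f A x ≤ d.1 x} := mk_biUnion_le _ _
    _ ≤ #D * #K := mul_le_mul' le_rfl (ciSup_le' fun d => (mk_setOf_forall_le_lt hf d).le)
    _ < 2 ^ #X := mul_lt_of_lt (hX.trans (cantor _).le) hD hKX
  exact this.false

theorem stmt_17 (P : Type) [PartialOrder P] (k l : Cardinal) (hk : ℵ₀ ≤ k)
    (hb : boundingNumber P = k) (hP : #P ≤ 2 ^ l) (hl : ℵ₀ ≤ l) (hlk : l ^ k = l) :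
    everyCof l.ord.ToType P = 2 ^ l ∧
    ∃ (φm : (l.ord.ToType → k.ord.ToType) → (l.ord.ToType → P))
      (φp : (l.ord.ToType → P) → (l.ord.ToType → k.ord.ToType)),
      ∀ (g : l.ord.ToType → k.ord.ToType) (f : l.ord.ToType → P),
        (∀ x, φm g x ≤ f x) → ∀ x, g x ≤ φp f x := by
  have hX : #l.ord.ToType = l := mk_ord_toType l
  have hK : #k.ord.ToType = k := mk_ord_toType k
  have : NoMaxOrder k.ord.ToType := noMaxOrder hk
  obtain ⟨φ, ψ, hφψ⟩ := exists_isTukeyPair_of_boundingNumber_eq hk hb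
  refine ⟨le_antisymm ?_ ?_, (φ ∘ ·), (ψ ∘ ·), fun g f h x => hφψ _ _ (h x)⟩
  · calc everyCof l.ord.ToType P ≤ #(l.ord.ToType → P) := everyCof_le_mk_s17 _ _
      _ = #P ^ l := by rw [← power_def, hX]
      _ ≤ (2 ^ l) ^ l := power_le_power_right hP
      _ = 2 ^ l := by rw [← power_mul, mul_eq_self hl]
  · calc 2 ^ l = 2 ^ #l.ord.ToType := by rw [hX]
      _ ≤ everyCof l.ord.ToType k.ord.ToType :=
        two_power_le_everyCof (by rwa [hK]) (by rwa [hX]) (by rw [hX, hK, hlk])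
      _ ≤ everyCof l.ord.ToType P := hφψ.everyCof_le
end
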